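/- arXiv:math/0401133 — 2 statements merged into one kernel-verified Lean document; each statement's English description precedes it below -/
import Mathlib

section
/- With notation as follows: G a finitely generated group, X_1,…,X_n nontrivial H_i-almost invariant subsets (H_i finitely generated) in good position, E = E(X_1,…,X_n), a finite generating set fixed, g ∈ G, R > 0 satisfying: for all A, B ∈ E with A ≤ B and all g' ∈ A with N_R(g') ⊆ A, one has g' ∈ B; E_R = {A ∈ E : some edge of the Cayley graph with one endpoint in A and the other in A* has an endpoint in N_R(g)}, E_R* = E − E_R, U_g = {A ∈ E_R* : g ∈ A}, U_1 = U_g ∪ {B ∈ E_R : there exists A ∈ U_g with A ≤ B}, V_1 = E − (U_1 ∪ U_1*), A_1 a minimal element of V_1 with respect to ≤, and U_2 = U_1 ∪ {A_1} ∪ {B ∈ V_1 : A_1 ≤ B}. Then U_2 is an ultrafilter on the set U_2 ∪ U_2*: no B satisfies both B ∈ U_2 and B* ∈ U_2, and whenever C ∈ U_2, D ∈ U_2 ∪ U_2* and C ≤ D, then D ∈ U_2. -/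
open Pointwise

universe u v

section Defs

variable {G : Type v} [Group G]

/-- `W` is `H`-finite: `W` is contained in the union of finitely many left cosets of `H`. -/
def HFin (H : Subgroup G) (W : Set G) : Prop :=
  ∃ F : Finset G, W ⊆ (H : Set G) * (F : Set G)

/-- `X` is an `H`-almost invariant subset of `G`: `HX = X` and for every `a : G`
the symmetric difference of `X` and `Xa` is `H`-finite. -/
def AlmostInv (H : Subgroup G) (X : Set G) : Prop :=
  (∀ h ∈ H, h • X = X) ∧
    ∀ a : G, HFin H ((X \ (· * a) '' X) ∪ ((· * a) '' X \ X))

/-- `X` is a nontrivial `H`-almost invariant subset of `G`. -/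
def NontrivAI (H : Subgroup G) (X : Set G) : Prop :=
  AlmostInv H X ∧ ¬ HFin H X ∧ ¬ HFin H Xᶜ

/-- `X ~ Y` : the symmetric difference of `X` and `Y` is `H`-finite. -/
def AIEquiv (H : Subgroup G) (X Y : Set G) : Prop :=
  HFin H ((X \ Y) ∪ (Y \ X))

/-- `H` and `K` are commensurable: `H ⊓ K` has finite index in both `H` and `K`. -/
def CommSub (H K : Subgroup G) : Prop :=
  ((H ⊓ K).subgroupOf H).index ≠ 0 ∧ ((H ⊓ K).subgroupOf K).index ≠ 0

/-- `E(X₁,…,Xₙ)`: the set of all translates of the `Xᵢ` and of their complements. -/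
def ESet {ι : Type*} (X : ι → Set G) : Set (Set G) :=
  {A | ∃ (i : ι) (g : G), A = g • X i ∨ A = (g • X i)ᶜ}

/-- `W` is small with respect to `U ∈ E`: `W` is `gHᵢg⁻¹`-finite, where `U = gXᵢ` or
`U = (gXᵢ)ᶜ` (so that `U` is almost invariant over `gHᵢg⁻¹`). -/
def SmallFor {ι : Type*} (H : ι → Subgroup G) (X : ι → Set G) (U W : Set G) : Prop :=
  ∃ (i : ι) (g : G), (U = g • X i ∨ U = (g • X i)ᶜ) ∧ HFin (H i) (g⁻¹ • W)

/-- Condition (*) (good position): if two of the four corners of a pair of elements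
of `E` are small, then one of the four corners is empty. -/
def GoodPos {ι : Type*} (H : ι → Subgroup G) (X : ι → Set G) : Prop :=
  ∀ U ∈ ESet X, ∀ V ∈ ESet X, ∀ p q : Fin 4, p ≠ q →
    SmallFor H X U (![U ∩ V, U ∩ Vᶜ, Uᶜ ∩ V, Uᶜ ∩ Vᶜ] p) →
    SmallFor H X U (![U ∩ V, U ∩ Vᶜ, Uᶜ ∩ V, Uᶜ ∩ Vᶜ] q) →
    U ∩ V = ∅ ∨ U ∩ Vᶜ = ∅ ∨ Uᶜ ∩ V = ∅ ∨ Uᶜ ∩ Vᶜ = ∅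

/-- Almost inclusion: `U ≤ V` iff `U ∩ Vᶜ` is empty or is the only small corner
among the four corners of `(U, V)`. -/
def LeE {ι : Type*} (H : ι → Subgroup G) (X : ι → Set G) (U V : Set G) : Prop :=
  U ∩ Vᶜ = ∅ ∨
    (SmallFor H X U (U ∩ Vᶜ) ∧ ¬ SmallFor H X U (U ∩ V) ∧
      ¬ SmallFor H X U (Uᶜ ∩ V) ∧ ¬ SmallFor H X U (Uᶜ ∩ Vᶜ))

/-- `E(Y)` for a single almost invariant set. -/
def ESet1 (Y : Set G) : Set (Set G) := ESet (fun _ : Unit => Y)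

def SmallFor1 (K : Subgroup G) (Y : Set G) (U W : Set G) : Prop :=
  SmallFor (fun _ : Unit => K) (fun _ : Unit => Y) U W

def GoodPos1 (K : Subgroup G) (Y : Set G) : Prop :=
  GoodPos (fun _ : Unit => K) (fun _ : Unit => Y)

def LeE1 (K : Subgroup G) (Y : Set G) (U V : Set G) : Prop :=
  LeE (fun _ : Unit => K) (fun _ : Unit => Y) U V

/-- `Y` is invertible: some `g ∈ G` satisfies `gY = Y*`. -/
def InvertibleSet (Y : Set G) : Prop := ∃ g : G, g • Y = Yᶜ

/-- There is a `G`-equivariant bijection `E(Y₁) → E(Y₂)` preserving complementation,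
the partial order of almost inclusion, and equivalence classes. -/
def GoodBij (K₁ : Subgroup G) (Y₁ : Set G) (K₂ : Subgroup G) (Y₂ : Set G) : Prop :=
  ∃ φ : Set G → Set G,
    Set.BijOn φ (ESet1 Y₁) (ESet1 Y₂) ∧
    (∀ (g : G), ∀ U ∈ ESet1 Y₁, φ (g • U) = g • φ U) ∧
    (∀ U ∈ ESet1 Y₁, ∀ V ∈ ESet1 Y₁, LeE1 K₁ Y₁ U V → LeE1 K₂ Y₂ (φ U) (φ V)) ∧
    (∀ U ∈ ESet1 Y₁, φ Uᶜ = (φ U)ᶜ) ∧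
    (∀ U ∈ ESet1 Y₁, SmallFor1 K₁ Y₁ U ((U \ φ U) ∪ (φ U \ U)))

/-- `x` lies in the ball of radius `R` about `g` in the word metric determined by `S`. -/
def InBall (S : Finset G) (R : ℕ) (g x : G) : Prop :=
  ∃ l : List G, (∀ s ∈ l, s ∈ S ∨ s⁻¹ ∈ S) ∧ l.length ≤ R ∧ x = g * l.prod

/-- Some edge of the Cayley graph of `(G,S)` with one endpoint in `A` and the other in
`Aᶜ` has an endpoint in the ball `N_R(g)`. -/
def BNear (S : Finset G) (R : ℕ) (g : G) (A : Set G) : Prop :=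
  ∃ x s : G, (s ∈ S ∨ s⁻¹ ∈ S) ∧
    ((x ∈ A ∧ x * s ∉ A) ∨ (x ∉ A ∧ x * s ∈ A)) ∧
    (InBall S R g x ∨ InBall S R g (x * s))

/-- `E_R* = E − E_R`: the elements of `E` no edge of whose coboundary meets `N_R(g)`. -/
def ERstar (S : Finset G) (R : ℕ) (g : G) {ι : Type*} (X : ι → Set G) : Set (Set G) :=
  {A | A ∈ ESet X ∧ ¬ BNear S R g A}

/-- `U_g = {A ∈ E_R* : g ∈ A}`. -/
def UgSet (S : Finset G) (R : ℕ) (g : G) {ι : Type*} (X : ι → Set G) : Set (Set G) :=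
  {A | A ∈ ERstar S R g X ∧ g ∈ A}

/-- `U₁ = U_g ∪ {B ∈ E_R : ∃ A ∈ U_g, A ≤ B}`. -/
def U1Set {ι : Type*} (H : ι → Subgroup G) (S : Finset G) (R : ℕ) (g : G) (X : ι → Set G) :
    Set (Set G) :=
  UgSet S R g X ∪
    {B | (B ∈ ESet X ∧ BNear S R g B) ∧ ∃ A ∈ UgSet S R g X, LeE H X A B}

/-- `V₁ = E − (U₁ ∪ U₁*)`. -/
def V1Set {ι : Type*} (H : ι → Subgroup G) (S : Finset G) (R : ℕ) (g : G) (X : ι → Set G) :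
    Set (Set G) :=
  ESet X \ (U1Set H S R g X ∪ (fun B : Set G => Bᶜ) '' U1Set H S R g X)

/-- `U₂ = U₁ ∪ {A₁} ∪ {B ∈ V₁ : A₁ ≤ B}`. -/
def U2Set {ι : Type*} (H : ι → Subgroup G) (S : Finset G) (R : ℕ) (g : G) (X : ι → Set G)
    (A₁ : Set G) : Set (Set G) :=
  U1Set H S R g X ∪ {A₁} ∪ {B | B ∈ V1Set H S R g X ∧ LeE H X A₁ B}

/-- `G` is (canonically isomorphic to) the amalgamated free product `A *_C B` of its
subgroups `A` and `B` over `C`, expressed via the universal property of the pushout. -/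
def IsAmalgam (C A B : Subgroup G) : Prop :=
  C ≤ A ∧ C ≤ B ∧
    ∀ (P : Type u) [Group P] (f : ↥A →* P) (g : ↥B →* P),
      (∀ (c : G) (hcA : c ∈ A) (hcB : c ∈ B), c ∈ C → f ⟨c, hcA⟩ = g ⟨c, hcB⟩) →
      ∃! h : G →* P, (∀ (a : G) (ha : a ∈ A), h a = f ⟨a, ha⟩) ∧
        (∀ (b : G) (hb : b ∈ B), h b = g ⟨b, hb⟩)

/-- `G` is (canonically isomorphic to) an HNN extension with associated subgroup `C`:
there are a base subgroup `K`, associated subgroups `C, D ≤ K`, an isomorphism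
`φ : C ≃ D` and a stable letter `t` conjugating `C` to `D` via `φ`, such that `G` has
the universal property of the HNN extension. -/
def IsHNNOver (C : Subgroup G) : Prop :=
  ∃ (K D : Subgroup G) (t : G) (φ : ↥C ≃* ↥D),
    C ≤ K ∧ D ≤ K ∧
    (∀ c : ↥C, t⁻¹ * (c : G) * t = ((φ c : ↥D) : G)) ∧
    ∀ (P : Type u) [Group P] (f : ↥K →* P) (p : P),
      (∀ (c : ↥C) (hc : (c : G) ∈ K) (hc' : ((φ c : ↥D) : G) ∈ K),
        p⁻¹ * f ⟨(c : G), hc⟩ * p = f ⟨((φ c : ↥D) : G), hc'⟩) →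
      ∃! h : G →* P, (∀ (k : G) (hk : k ∈ K), h k = f ⟨k, hk⟩) ∧ h t = p

/-- `G` splits over `C`: `G` is an amalgamated free product `A *_C B` in which `C` is a
proper subgroup of both `A` and `B`, or an HNN extension with associated subgroup `C`. -/
def SplitsOver (C : Subgroup G) : Prop :=
  (∃ A B : Subgroup G, C ≠ A ∧ C ≠ B ∧ IsAmalgam.{u} C A B) ∨ IsHNNOver.{u} C

end Defs

/-!
Everything rests on one translation argument in the Cayley graph: if `Y` is `M`-invariant and
`Q ⊆ M * F` contains, for every `r`, a point whose `r`-ball meets `Y` only inside `Q`, then moving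
that point back into the finite set `F` by an element of `M` carries any given point of `Y` into
`Q`, so `Y ⊆ M * F`. Deep points of a non-small corner exist because the boundary of an almost
invariant set is `H`-finite, so a corner small for one element of a pair is small for the other.
A path argument shows that an almost-stabiliser of `U` is finite over any other one, so smallness
does not depend on how `U` is written as a translate. Hence `≤` reverses under complements and,
by good position, is transitive.

Every element of `U₂` lies above an element of `U_g` or above `A₁`. Hence `C ≤ B*` with
`C, B ∈ U₂` either puts `B*` in `U₁` (then `g ∈ B ∩ B*`, or `B ∈ V₁` meets `U₁*`), or gives
`A₁ ≤ B` and `A₁ ≤ B*`, making `A₁` itself small. Both ultrafilter properties reduce to the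
impossibility of such a `C ≤ B*`.
-/

section

variable {G : Type*} [Group G]

section WordMetric

variable {S : Finset G} {r : ℕ}

theorem inBall_self (S : Finset G) (r : ℕ) (c : G) : InBall S r c c :=
  ⟨[], by simp, by simp, by simp⟩

theorem InBall.mono {r' : ℕ} {c x : G} (h : InBall S r c x) (hr : r ≤ r') : InBall S r' c x :=
  let ⟨l, hl, hlen, hx⟩ := h
  ⟨l, hl, hlen.trans hr, hx⟩

theorem inBall_mul_left_iff (a c x : G) : InBall S r (a * c) (a * x) ↔ InBall S r c x := by
  simp only [InBall, mul_assoc, mul_right_inj]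

theorem inBall_iff_inBall_one {c x : G} : InBall S r c x ↔ InBall S r 1 (c⁻¹ * x) := by
  rw [← inBall_mul_left_iff c⁻¹, inv_mul_cancel]

theorem exists_inBall (hS : Subgroup.closure (S : Set G) = ⊤) (c x : G) :
    ∃ r, InBall S r c x := by
  have hmem : c⁻¹ * x ∈ Submonoid.closure ((S : Set G) ∪ (S : Set G)⁻¹) := by
    rw [← Subgroup.closure_toSubmonoid, hS]
    trivial
  obtain ⟨l, hl, hprod⟩ := Submonoid.exists_list_of_mem_closure hmem
  exact ⟨l.length, l, fun s hs => by simpa using hl s hs, le_rfl, by rw [hprod, mul_inv_cancel_left]⟩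

theorem exists_inBall_forall_mem (hS : Subgroup.closure (S : Set G) = ⊤) (F : Finset G) (x : G) :
    ∃ r, ∀ f ∈ F, InBall S r f x := by
  choose ρ hρ using fun f => exists_inBall hS f x
  exact ⟨F.sup ρ, fun f hf => (hρ f).mono (Finset.le_sup hf)⟩

theorem finite_setOf_inBall_one (S : Finset G) (r : ℕ) : {x : G | InBall S r 1 x}.Finite := by
  let T : Set G := {s | s ∈ S ∨ s⁻¹ ∈ S}
  have : Finite T := ((S.finite_toSet.union S.finite_toSet.inv).subset fun _ h => h).to_subtype
  refine ((List.finite_length_le T r).image fun l => (l.map Subtype.val).prod).subset ?_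
  rintro x ⟨l, hl, hlen, rfl⟩
  lift l to List T using hl
  exact ⟨l, by simpa using hlen, by simp⟩

end WordMetric

section Boundary

variable {S : Finset G} {r : ℕ}

def innerBoundary (S : Finset G) (A : Set G) : Set G :=
  {y | y ∈ A ∧ ∃ s, (s ∈ S ∨ s⁻¹ ∈ S) ∧ y * s ∉ A}

theorem exists_mem_innerBoundary_of_inBall {A : Set G} {x y : G} (hx : x ∈ A) (hy : y ∉ A)
    (h : InBall S r x y) : ∃ b ∈ innerBoundary S A, InBall S r x b := by
  obtain ⟨l, hl, hlen, rfl⟩ := h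
  induction l generalizing x r with
  | nil => simp [hx] at hy
  | cons s t ih =>
    have hs := hl s List.mem_cons_self
    by_cases hxs : x * s ∈ A
    · obtain ⟨b, hb, l', hl', hlen', rfl⟩ := ih (r := r - 1) hxs
        (fun u hu => hl u (List.mem_cons_of_mem s hu)) (by simp at hlen; omega)
        (by simpa [mul_assoc] using hy)
      refine ⟨_, hb, s :: l', ?_, by simp at hlen ⊢; omega, by simp [mul_assoc]⟩
      exact fun u hu => (List.mem_cons.1 hu).elim (fun h => h ▸ hs) (hl' u)
    · exact ⟨x, ⟨hx, s, hs, hxs⟩, inBall_self S r x⟩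

theorem mem_of_inBall_of_not_mem_innerBoundary {A : Set G} {w : G} (hw : w ∈ A)
    (h : ∀ x, InBall S r w x → x ∉ innerBoundary S A) {x : G} (hx : InBall S r w x) : x ∈ A := by
  by_contra hxA
  obtain ⟨b, hb, hwb⟩ := exists_mem_innerBoundary_of_inBall hw hxA hx
  exact h b hwb hb

end Boundary

section HFin

variable {K L : Subgroup G} {W W' : Set G}

theorem HFin.mono (h : HFin K W) (hW : W' ⊆ W) : HFin K W' :=
  let ⟨F, hF⟩ := h
  ⟨F, hW.trans hF⟩

theorem hfin_empty (K : Subgroup G) : HFin K (∅ : Set G) :=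
  ⟨∅, Set.empty_subset _⟩

theorem HFin.union (h : HFin K W) (h' : HFin K W') : HFin K (W ∪ W') := by
  classical
  obtain ⟨F, hF⟩ := h
  obtain ⟨F', hF'⟩ := h'
  refine ⟨F ∪ F', ?_⟩
  rw [Finset.coe_union, Set.mul_union]
  exact Set.union_subset_union hF hF'

theorem HFin.mul_finite (h : HFin K W) {B : Set G} (hB : B.Finite) : HFin K (W * B) := by
  classical
  obtain ⟨F, hF⟩ := h
  refine ⟨F * hB.toFinset, ?_⟩
  rw [Finset.coe_mul, Set.Finite.coe_toFinset, ← mul_assoc]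
  exact Set.mul_subset_mul_right hF

theorem HFin.of_hfin_subgroup (h : HFin K W) (hK : HFin L (K : Set G)) : HFin L W := by
  obtain ⟨F, hF⟩ := h
  exact (hK.mul_finite F.finite_toSet).mono hF

theorem smul_subgroup_mul (g : G) (K : Subgroup G) (F : Set G) :
    g • ((K : Set G) * F) = ((MulAut.conj g • K : Subgroup G) : Set G) * (g • F) := by
  ext x
  simp only [Set.mem_smul_set, Set.mem_mul, SetLike.mem_coe,
    Subgroup.mem_pointwise_smul_iff_inv_smul_mem, smul_eq_mul, ← map_inv, MulAut.smul_def,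
    MulAut.conj_apply, inv_inv]
  constructor
  · rintro ⟨_, ⟨k, hk, f, hf, rfl⟩, rfl⟩
    exact ⟨g * k * g⁻¹, by simpa [mul_assoc] using hk, _, ⟨f, hf, rfl⟩, by group⟩
  · rintro ⟨k', hk', _, ⟨f, hf, rfl⟩, rfl⟩
    exact ⟨_, ⟨_, hk', f, hf, rfl⟩, by group⟩

theorem hfin_conj_smul_iff (g : G) : HFin (MulAut.conj g • K) (g • W) ↔ HFin K W := by
  classical
  constructor
  · rintro ⟨F, hF⟩
    refine ⟨g⁻¹ • F, ?_⟩
    rw [← Set.smul_set_subset_smul_set_iff (a := g), smul_subgroup_mul, Finset.coe_smul_finset,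
      smul_inv_smul]
    exact hF
  · rintro ⟨F, hF⟩
    refine ⟨g • F, ?_⟩
    rw [Finset.coe_smul_finset, ← smul_subgroup_mul]
    exact Set.smul_set_mono hF

end HFin

section AlmostInvariant

variable {K : Subgroup G} {Z : Set G}

theorem mul_mem_iff_of_smul_eq (hZ : ∀ k ∈ K, k • Z = Z) {k : G} (hk : k ∈ K) {x : G} :
    k * x ∈ Z ↔ x ∈ Z := by
  conv_lhs => rw [← hZ k hk]
  exact Set.smul_mem_smul_set_iff

theorem AlmostInv.hfin_innerBoundary (S : Finset G) (hZ : AlmostInv K Z) :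
    HFin K (innerBoundary S Z) := by
  classical
  choose F hF using hZ.2
  refine ⟨(S ∪ S⁻¹).biUnion fun s => F s⁻¹, ?_⟩
  rintro y ⟨hy, s, hs, hys⟩
  have hmem : y ∈ (K : Set G) * F s⁻¹ :=
    hF s⁻¹ (Or.inl ⟨hy, fun ⟨z, hz, hzy⟩ => hys (by rw [← hzy]; simpa using hz)⟩)
  refine Set.mul_subset_mul_left (fun f hf => ?_) hmem
  simp only [Finset.coe_biUnion, Set.mem_iUnion, Finset.mem_coe]
  exact ⟨s, by simpa [Finset.mem_union, Finset.mem_inv] using hs, hf⟩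

theorem AlmostInv.compl (hZ : AlmostInv K Z) : AlmostInv K Zᶜ := by
  refine ⟨fun k hk => by rw [Set.smul_set_compl, hZ.1 k hk], fun a => ?_⟩
  rw [Set.image_compl_eq (f := (· * a)) (Equiv.mulRight a).bijective]
  convert hZ.2 a using 1
  ext x
  simp only [Set.mem_union, Set.mem_sdiff, Set.mem_compl_iff, not_not]
  tauto

theorem AlmostInv.smul (hZ : AlmostInv K Z) (g : G) : AlmostInv (MulAut.conj g • K) (g • Z) := by
  refine ⟨fun h hh => ?_, fun a => ?_⟩
  · rw [Subgroup.mem_pointwise_smul_iff_inv_smul_mem, ← map_inv, MulAut.smul_def,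
      MulAut.conj_apply, inv_inv] at hh
    rw [smul_smul, show h * g = g * (g⁻¹ * h * g) by group, ← smul_smul, hZ.1 _ hh]
  · rw [Set.image_smul_comm (· * a) g Z fun b => mul_assoc g b a, ← Set.smul_set_sdiff,
      ← Set.smul_set_sdiff, ← Set.smul_set_union, hfin_conj_smul_iff]
    exact hZ.2 a

theorem NontrivAI.compl (hZ : NontrivAI K Z) : NontrivAI K Zᶜ :=
  ⟨hZ.1.compl, hZ.2.2, by rw [compl_compl]; exact hZ.2.1⟩

theorem NontrivAI.smul (hZ : NontrivAI K Z) (g : G) : NontrivAI (MulAut.conj g • K) (g • Z) :=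
  ⟨hZ.1.smul g, by rw [hfin_conj_smul_iff]; exact hZ.2.1,
    by rw [← Set.smul_set_compl, hfin_conj_smul_iff]; exact hZ.2.2⟩

theorem NontrivAI.nonempty (hZ : NontrivAI K Z) : Z.Nonempty :=
  Set.nonempty_iff_ne_empty.2 fun h => hZ.2.1 (h ▸ hfin_empty K)

end AlmostInvariant

section Transfer

variable {S : Finset G} {K L M : Subgroup G}

theorem hfin_subgroup_of_hfin_innerBoundary (hS : Subgroup.closure (S : Set G) = ⊤) {U : Set G}
    (hK : ∀ k ∈ K, k • U = U) {z y : G} (hz : z ∈ U) (hy : y ∉ U)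
    (hbd : HFin L (innerBoundary S U)) : HFin L (K : Set G) := by
  obtain ⟨r, hr⟩ := exists_inBall hS z y
  refine (hbd.mul_finite ((finite_setOf_inBall_one S r).inv.mul
    (Set.finite_singleton z⁻¹))).mono fun k hk => ?_
  obtain ⟨b, hb, hkb⟩ := exists_mem_innerBoundary_of_inBall
    ((mul_mem_iff_of_smul_eq hK hk).2 hz) (by rwa [mul_mem_iff_of_smul_eq hK hk])
    ((inBall_mul_left_iff k z y).2 hr)
  rw [inBall_iff_inBall_one] at hkb
  exact ⟨b, hb, ((k * z)⁻¹ * b)⁻¹ * z⁻¹,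
    Set.mul_mem_mul (Set.inv_mem_inv.2 hkb) (Set.mem_singleton _), by group⟩

theorem NontrivAI.hfin_of_hfin (hS : Subgroup.closure (S : Set G) = ⊤) {U W : Set G}
    (hK : NontrivAI K U) (hL : NontrivAI L U) (h : HFin K W) : HFin L W :=
  let ⟨_, hz⟩ := hK.nonempty
  let ⟨_, hy⟩ := hK.compl.nonempty
  h.of_hfin_subgroup
    (hfin_subgroup_of_hfin_innerBoundary hS hK.1.1 hz hy (hL.1.hfin_innerBoundary S))

theorem exists_forall_inBall_not_mem {W T : Set G} (h : ¬ HFin L W) (hT : HFin L T) (r : ℕ) :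
    ∃ w ∈ W, ∀ x, InBall S r w x → x ∉ T := by
  by_contra! hc
  refine h ((hT.mul_finite (finite_setOf_inBall_one S r).inv).mono fun w hw => ?_)
  obtain ⟨x, hwx, hx⟩ := hc w hw
  rw [inBall_iff_inBall_one] at hwx
  exact ⟨x, hx, (w⁻¹ * x)⁻¹, by simpa using hwx, by group⟩

theorem hfin_of_forall_exists_inBall (hS : Subgroup.closure (S : Set G) = ⊤) {Y Q : Set G}
    {F : Finset G} (hY : ∀ m ∈ M, m • Y = Y) (hQ : Q ⊆ (M : Set G) * F)
    (h : ∀ r, ∃ w ∈ Q, ∀ x, InBall S r w x → x ∈ Y → x ∈ Q) : HFin M Y := by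
  refine ⟨F, fun x hx => ?_⟩
  obtain ⟨r, hr⟩ := exists_inBall_forall_mem hS F x
  obtain ⟨w, hw, hwQ⟩ := h r
  obtain ⟨m, hm, f, hf, rfl⟩ := hQ hw
  obtain ⟨m', hm', f', hf', he⟩ := hQ (hwQ (m * x) ((inBall_mul_left_iff m f x).2 (hr f hf))
    ((mul_mem_iff_of_smul_eq hY hm).2 hx))
  exact ⟨m⁻¹ * m', mul_mem (inv_mem hm) hm', f', hf', by
    simp only at he ⊢
    rw [mul_assoc, he, inv_mul_cancel_left]⟩

theorem hfin_inter_of_hfin_inter (hS : Subgroup.closure (S : Set G) = ⊤) {U V : Set G}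
    (hU : ∀ k ∈ K, k • U = U) (hUK : ¬ HFin K U) (hV : HFin L (innerBoundary S V))
    (h : HFin K (U ∩ V)) : HFin L (U ∩ V) := by
  by_contra hL
  obtain ⟨F, hF⟩ := h
  refine hUK (hfin_of_forall_exists_inBall hS hU hF fun r => ?_)
  obtain ⟨w, hw, hfar⟩ := exists_forall_inBall_not_mem hL hV r
  exact ⟨w, hw, fun x hx hxU => ⟨hxU, mem_of_inBall_of_not_mem_innerBoundary hw.2 hfar hx⟩⟩

theorem hfin_of_hfin_sdiff (hS : Subgroup.closure (S : Set G) = ⊤) {U Y Q : Set G}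
    (hU : HFin K (innerBoundary S U)) (hY : ∀ m ∈ M, m • Y = Y) (hYM : ¬ HFin M Y)
    (hQ : Q ⊆ U ∩ Y) (hQM : HFin M Q) (hK : HFin K ((U ∩ Y) \ Q)) : HFin K Q := by
  by_contra hQK
  obtain ⟨F, hF⟩ := hQM
  refine hYM (hfin_of_forall_exists_inBall hS hY hF fun r => ?_)
  obtain ⟨w, hw, hfar⟩ := exists_forall_inBall_not_mem hQK (hU.union hK) r
  refine ⟨w, hw, fun x hx hxY => ?_⟩
  have hxU : x ∈ U := mem_of_inBall_of_not_mem_innerBoundary (hQ hw).1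
    (fun x hx hb => hfar x hx (Or.inl hb)) hx
  by_contra hxQ
  exact hfar x hx (Or.inr ⟨⟨hxU, hxY⟩, hxQ⟩)

end Transfer

section Smallness

variable {ι : Type*} {H : ι → Subgroup G} {X : ι → Set G} {S : Finset G} {U V W : Set G}

theorem nontrivAI_of_eq (hnt : ∀ i, NontrivAI (H i) (X i)) {i : ι} {g : G}
    (hU : U = g • X i ∨ U = (g • X i)ᶜ) : NontrivAI (MulAut.conj g • H i) U := by
  rcases hU with rfl | rfl
  exacts [(hnt i).smul g, ((hnt i).smul g).compl]

theorem exists_nontrivAI_of_mem_ESet (hnt : ∀ i, NontrivAI (H i) (X i)) (hU : U ∈ ESet X) :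
    ∃ K, NontrivAI K U :=
  let ⟨_, _, h⟩ := hU
  ⟨_, nontrivAI_of_eq hnt h⟩

theorem compl_mem_ESet (hU : U ∈ ESet X) : Uᶜ ∈ ESet X := by
  obtain ⟨i, g, h | h⟩ := hU
  exacts [⟨i, g, Or.inr (congrArg _ h)⟩, ⟨i, g, Or.inl (by rw [h, compl_compl])⟩]

theorem SmallFor.exists_nontrivAI (hnt : ∀ i, NontrivAI (H i) (X i)) (h : SmallFor H X U W) :
    ∃ K, NontrivAI K U ∧ HFin K W := by
  obtain ⟨i, g, hU, hW⟩ := h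
  exact ⟨_, nontrivAI_of_eq hnt hU, by
    simpa only [smul_inv_smul] using (hfin_conj_smul_iff g).2 hW⟩

theorem smallFor_iff_hfin (hS : Subgroup.closure (S : Set G) = ⊤)
    (hnt : ∀ i, NontrivAI (H i) (X i)) (hU : U ∈ ESet X) {K : Subgroup G} (hK : NontrivAI K U) :
    SmallFor H X U W ↔ HFin K W := by
  constructor
  · intro h
    obtain ⟨L, hL, hW⟩ := h.exists_nontrivAI hnt
    exact hL.hfin_of_hfin hS hK hW
  · intro h
    obtain ⟨i, g, hrep⟩ := hU
    refine ⟨i, g, hrep, ?_⟩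
    rw [← hfin_conj_smul_iff g, smul_inv_smul]
    exact hK.hfin_of_hfin hS (nontrivAI_of_eq hnt hrep) h

theorem SmallFor.mono (h : SmallFor H X U W) (hVW : V ⊆ W) : SmallFor H X U V :=
  let ⟨i, g, hU, hW⟩ := h
  ⟨i, g, hU, hW.mono (Set.smul_set_mono hVW)⟩

theorem smallFor_compl_iff : SmallFor H X Uᶜ W ↔ SmallFor H X U W := by
  refine exists_congr fun i => exists_congr fun g => and_congr_left' ?_
  rw [compl_inj_iff, compl_eq_comm, eq_comm (a := (g • X i)ᶜ), or_comm]

theorem smallFor_empty (hU : U ∈ ESet X) : SmallFor H X U ∅ :=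
  let ⟨i, g, h⟩ := hU
  ⟨i, g, h, by simpa using hfin_empty (H i)⟩

theorem not_smallFor_self (hnt : ∀ i, NontrivAI (H i) (X i)) : ¬ SmallFor H X U U := fun h =>
  let ⟨_, hK, hU⟩ := h.exists_nontrivAI hnt
  hK.2.1 hU

theorem SmallFor.union (hS : Subgroup.closure (S : Set G) = ⊤)
    (hnt : ∀ i, NontrivAI (H i) (X i)) (hU : U ∈ ESet X) (hV : SmallFor H X U V)
    (hW : SmallFor H X U W) : SmallFor H X U (V ∪ W) := by
  obtain ⟨K, hK⟩ := exists_nontrivAI_of_mem_ESet hnt hU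
  rw [smallFor_iff_hfin hS hnt hU hK] at hV hW ⊢
  exact hV.union hW

theorem SmallFor.swap_inter (hS : Subgroup.closure (S : Set G) = ⊤)
    (hnt : ∀ i, NontrivAI (H i) (X i)) (hU : U ∈ ESet X) (hV : V ∈ ESet X)
    (h : SmallFor H X U (U ∩ V)) : SmallFor H X V (U ∩ V) := by
  obtain ⟨K, hK⟩ := exists_nontrivAI_of_mem_ESet hnt hU
  obtain ⟨L, hL⟩ := exists_nontrivAI_of_mem_ESet hnt hV
  rw [smallFor_iff_hfin hS hnt hU hK] at h
  rw [smallFor_iff_hfin hS hnt hV hL]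
  exact hfin_inter_of_hfin_inter hS hK.1.1 hK.2.1 (hL.1.hfin_innerBoundary S) h

theorem SmallFor.inter_compl_trans (hS : Subgroup.closure (S : Set G) = ⊤)
    (hnt : ∀ i, NontrivAI (H i) (X i)) (hU : U ∈ ESet X) (hV : V ∈ ESet X) (hW : W ∈ ESet X)
    (hUV : SmallFor H X U (U ∩ Vᶜ)) (hVW : SmallFor H X V (V ∩ Wᶜ)) :
    SmallFor H X U (U ∩ Wᶜ) := by
  obtain ⟨K, hK⟩ := exists_nontrivAI_of_mem_ESet hnt hU
  obtain ⟨M, hM⟩ := exists_nontrivAI_of_mem_ESet hnt (compl_mem_ESet hW)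
  have hVW' := hVW.swap_inter hS hnt hV (compl_mem_ESet hW)
  rw [smallFor_iff_hfin hS hnt hU hK] at hUV ⊢
  rw [smallFor_iff_hfin hS hnt (compl_mem_ESet hW) hM] at hVW'
  have hcore : HFin K (U ∩ V ∩ Wᶜ) :=
    hfin_of_hfin_sdiff hS (hK.1.hfin_innerBoundary S) hM.1.1 hM.2.1
      (fun x hx => ⟨hx.1.1, hx.2⟩) (hVW'.mono fun x hx => ⟨hx.1.2, hx.2⟩)
      (hUV.mono fun x hx => ⟨hx.1.1, fun hxV => hx.2 ⟨⟨hx.1.1, hxV⟩, hx.1.2⟩⟩)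
  refine (hcore.union hUV).mono fun x hx => ?_
  by_cases hxV : x ∈ V
  exacts [Or.inl ⟨⟨hx.1, hxV⟩, hx.2⟩, Or.inr ⟨hx.1, hxV⟩]

end Smallness

theorem inter_compl_eq_empty_iff {α : Type*} {s t : Set α} : s ∩ tᶜ = ∅ ↔ s ⊆ t := by
  rw [← Set.sdiff_eq, Set.sdiff_eq_empty]

section AlmostInclusion

variable {ι : Type*} {H : ι → Subgroup G} {X : ι → Set G} {S : Finset G} {U V W : Set G}

theorem smallFor_inter_iff (hS : Subgroup.closure (S : Set G) = ⊤)
    (hnt : ∀ i, NontrivAI (H i) (X i)) (hU : U ∈ ESet X) (hV : V ∈ ESet X) :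
    SmallFor H X U (U ∩ V) ↔ SmallFor H X V (V ∩ U) :=
  ⟨fun h => Set.inter_comm U V ▸ h.swap_inter hS hnt hU hV,
    fun h => Set.inter_comm V U ▸ h.swap_inter hS hnt hV hU⟩

theorem leE_refl (U : Set G) : LeE H X U U :=
  Or.inl (Set.inter_compl_self U)

theorem LeE.smallFor_inter_compl (hU : U ∈ ESet X) (h : LeE H X U V) :
    SmallFor H X U (U ∩ Vᶜ) := by
  rcases h with h | h
  · rw [h]
    exact smallFor_empty hU
  · exact h.1

theorem LeE.subset_of_smallFor (h : LeE H X U V) (hs : SmallFor H X U (Uᶜ ∩ V)) : U ⊆ V :=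
  inter_compl_eq_empty_iff.1 (h.resolve_right fun h' => h'.2.2.1 hs)

theorem LeE.compl (hS : Subgroup.closure (S : Set G) = ⊤) (hnt : ∀ i, NontrivAI (H i) (X i))
    (hU : U ∈ ESet X) (hV : V ∈ ESet X) (h : LeE H X U V) : LeE H X Vᶜ Uᶜ := by
  have hUc := compl_mem_ESet hU
  have hVc := compl_mem_ESet hV
  rcases h with h | ⟨h₁, h₂, h₃, h₄⟩
  · left
    rwa [compl_compl, Set.inter_comm]
  · right
    simp only [compl_compl, smallFor_compl_iff]
    refine ⟨smallFor_compl_iff.1 ((smallFor_inter_iff hS hnt hU hVc).1 h₁), fun h => h₄ ?_,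
      fun h => h₃ ?_, fun h => h₂ ((smallFor_inter_iff hS hnt hV hU).1 h)⟩
    · exact smallFor_compl_iff.1 ((smallFor_inter_iff hS hnt hVc hUc).1 (smallFor_compl_iff.2 h))
    · exact smallFor_compl_iff.1 ((smallFor_inter_iff hS hnt hV hUc).1 h)

theorem LeE.trans (hS : Subgroup.closure (S : Set G) = ⊤) (hnt : ∀ i, NontrivAI (H i) (X i))
    (hgp : GoodPos H X) (hU : U ∈ ESet X) (hV : V ∈ ESet X) (hW : W ∈ ESet X)
    (hUV : LeE H X U V) (hVW : LeE H X V W) : LeE H X U W := by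
  by_cases hUW : U ⊆ W
  · exact Or.inl (inter_compl_eq_empty_iff.2 hUW)
  have hUVc := hUV.smallFor_inter_compl hU
  have hsmall : SmallFor H X U (U ∩ Wᶜ) :=
    hUVc.inter_compl_trans hS hnt hU hV hW (hVW.smallFor_inter_compl hV)
  have hUW' : ¬ SmallFor H X U (U ∩ W) := fun h => by
    have := h.union hS hnt hU hsmall
    rw [Set.inter_union_compl] at this
    exact not_smallFor_self hnt this
  suffices hcorner : U ∩ W = ∅ ∨ U ∩ Wᶜ = ∅ ∨ Uᶜ ∩ W = ∅ ∨ Uᶜ ∩ Wᶜ = ∅ → False from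
    Or.inr ⟨hsmall, hUW', fun h => hcorner (hgp U hU W hW 1 2 (by decide) hsmall h),
      fun h => hcorner (hgp U hU W hW 1 3 (by decide) hsmall h)⟩
  rintro (h | h | h | h)
  · have hUWc : U ⊆ Wᶜ := fun x hx hxW => Set.eq_empty_iff_forall_notMem.1 h x ⟨hx, hxW⟩
    rw [Set.inter_eq_left.2 hUWc] at hsmall
    exact not_smallFor_self hnt hsmall
  · exact hUW (inter_compl_eq_empty_iff.1 h)
  · -- `W ⊆ U` pushes the small corner `U ∩ Vᶜ` onto `Vᶜ ∩ W`, forcing `U ⊆ V ⊆ W`.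
    have hWU : W ⊆ U := fun x hx => by
      by_contra hxU
      exact Set.eq_empty_iff_forall_notMem.1 h x ⟨hxU, hx⟩
    have hVW' : V ⊆ W := hVW.subset_of_smallFor <| smallFor_compl_iff.1 <|
      (hUVc.swap_inter hS hnt hU (compl_mem_ESet hV)).mono fun x hx => ⟨hWU hx.2, hx.1⟩
    have hUV' : U ⊆ V := hUV.subset_of_smallFor <|
      (smallFor_empty hU).mono fun x hx => hx.1 (hWU (hVW' hx.2))
    exact hUW (hUV'.trans hVW')
  · have hWc : U ∩ Wᶜ = Wᶜ := Set.inter_eq_right.2 fun x hx => by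
      by_contra hxU
      exact Set.eq_empty_iff_forall_notMem.1 h x ⟨hxU, hx⟩
    have := hsmall.swap_inter hS hnt hU (compl_mem_ESet hW)
    rw [hWc] at this
    exact not_smallFor_self hnt this

theorem not_leE_and_leE_compl (hS : Subgroup.closure (S : Set G) = ⊤)
    (hnt : ∀ i, NontrivAI (H i) (X i)) (hU : U ∈ ESet X) (h : LeE H X U V)
    (h' : LeE H X U Vᶜ) : False := by
  have := (h'.smallFor_inter_compl hU).union hS hnt hU (h.smallFor_inter_compl hU)
  rw [compl_compl, Set.inter_union_compl] at this
  exact not_smallFor_self hnt this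

end AlmostInclusion

section Ultrafilter

variable {ι : Type*} {H : ι → Subgroup G} {X : ι → Set G} {S : Finset G} {R : ℕ} {g : G}
  {A B C A₁ : Set G}

theorem setOf_inBall_subset_of_not_bNear (hA : ¬ BNear S R g A) (hg : g ∈ A) :
    {x | InBall S R g x} ⊆ A := fun x hx => by
  by_contra hxA
  obtain ⟨b, ⟨hb, s, hs, hbs⟩, hgb⟩ := exists_mem_innerBoundary_of_inBall hg hxA hx
  exact hA ⟨b, s, hs, Or.inl ⟨hb, hbs⟩, Or.inl hgb⟩

theorem mem_ESet_of_mem_U1Set (hB : B ∈ U1Set H S R g X) : B ∈ ESet X :=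
  hB.elim (·.1.1) (·.1.1)

theorem mem_ESet_of_mem_U2Set (hA₁ : A₁ ∈ V1Set H S R g X) (hB : B ∈ U2Set H S R g X A₁) :
    B ∈ ESet X := by
  rcases hB with (hB | rfl) | hB
  exacts [mem_ESet_of_mem_U1Set hB, hA₁.1, hB.1.1]

theorem exists_mem_UgSet_leE_of_mem_U1Set (hB : B ∈ U1Set H S R g X) :
    ∃ A ∈ UgSet S R g X, LeE H X A B :=
  hB.elim (fun h => ⟨B, h, leE_refl B⟩) (·.2)

theorem exists_mem_UgSet_leE_or_leE_of_mem_U2Set (hC : C ∈ U2Set H S R g X A₁) :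
    (∃ A ∈ UgSet S R g X, LeE H X A C) ∨ LeE H X A₁ C := by
  rcases hC with (hC | rfl) | hC
  exacts [Or.inl (exists_mem_UgSet_leE_of_mem_U1Set hC), Or.inr (leE_refl _), Or.inr hC.2]

variable (hRP : ∀ A ∈ ESet X, ∀ B ∈ ESet X, LeE H X A B →
  ∀ g' ∈ A, {x : G | InBall S R g' x} ⊆ A → g' ∈ B)
include hRP

theorem mem_of_mem_UgSet_of_leE (hA : A ∈ UgSet S R g X) (hB : B ∈ ESet X)
    (h : LeE H X A B) : g ∈ B :=
  hRP A hA.1.1 B hB h g hA.2 (setOf_inBall_subset_of_not_bNear hA.1.2 hA.2)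

theorem mem_U1Set_of_mem_UgSet_of_leE (hA : A ∈ UgSet S R g X) (hB : B ∈ ESet X)
    (h : LeE H X A B) : B ∈ U1Set H S R g X := by
  by_cases hnear : BNear S R g B
  · exact Or.inr ⟨⟨hB, hnear⟩, A, hA, h⟩
  · exact Or.inl ⟨⟨hB, hnear⟩, mem_of_mem_UgSet_of_leE hRP hA hB h⟩

theorem mem_of_mem_U1Set (hB : B ∈ U1Set H S R g X) : g ∈ B :=
  let ⟨_, hA, h⟩ := exists_mem_UgSet_leE_of_mem_U1Set hB
  mem_of_mem_UgSet_of_leE hRP hA (mem_ESet_of_mem_U1Set hB) h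

variable (hA₁ : A₁ ∈ V1Set H S R g X)
include hA₁

theorem compl_not_mem_U1Set_of_mem_U2Set (hB : B ∈ U2Set H S R g X A₁) :
    Bᶜ ∉ U1Set H S R g X := fun hBc => by
  rcases hB with (hB | rfl) | hB
  · exact mem_of_mem_U1Set hRP hBc (mem_of_mem_U1Set hRP hB)
  · exact hA₁.2 (Or.inr ⟨_, hBc, compl_compl _⟩)
  · exact hB.1.2 (Or.inr ⟨_, hBc, compl_compl _⟩)

theorem not_leE_compl_of_mem_UgSet (hA : A ∈ UgSet S R g X) (hB : B ∈ U2Set H S R g X A₁) :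
    ¬ LeE H X A Bᶜ := fun h =>
  compl_not_mem_U1Set_of_mem_U2Set hRP hA₁ hB <| mem_U1Set_of_mem_UgSet_of_leE hRP hA
    (compl_mem_ESet (mem_ESet_of_mem_U2Set hA₁ hB)) h

theorem not_leE_compl_of_mem_V1Set (hS : Subgroup.closure (S : Set G) = ⊤)
    (hnt : ∀ i, NontrivAI (H i) (X i)) (hgp : GoodPos H X) (hB : B ∈ U2Set H S R g X A₁) :
    ¬ LeE H X A₁ Bᶜ := fun h => by
  rcases hB with (hB | rfl) | hB
  · obtain ⟨A, hA, hAB⟩ := exists_mem_UgSet_leE_of_mem_U1Set hB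
    have hBE := mem_ESet_of_mem_U1Set hB
    have hBA₁ : LeE H X B A₁ᶜ := by
      simpa only [compl_compl] using h.compl hS hnt hA₁.1 (compl_mem_ESet hBE)
    exact not_leE_compl_of_mem_UgSet hRP hA₁ hA (Or.inl (Or.inr rfl))
      (hAB.trans hS hnt hgp hA.1.1 hBE (compl_mem_ESet hA₁.1) hBA₁)
  · exact not_leE_and_leE_compl hS hnt hA₁.1 (leE_refl _) h
  · exact not_leE_and_leE_compl hS hnt hA₁.1 hB.2 h

theorem not_leE_compl_of_mem_U2Set (hS : Subgroup.closure (S : Set G) = ⊤)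
    (hnt : ∀ i, NontrivAI (H i) (X i)) (hgp : GoodPos H X) (hC : C ∈ U2Set H S R g X A₁)
    (hB : B ∈ U2Set H S R g X A₁) : ¬ LeE H X C Bᶜ := fun h => by
  have hCE := mem_ESet_of_mem_U2Set hA₁ hC
  have hBcE := compl_mem_ESet (mem_ESet_of_mem_U2Set hA₁ hB)
  rcases exists_mem_UgSet_leE_or_leE_of_mem_U2Set hC with ⟨A, hA, hAC⟩ | hAC
  · exact not_leE_compl_of_mem_UgSet hRP hA₁ hA hB (hAC.trans hS hnt hgp hA.1.1 hCE hBcE h)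
  · exact not_leE_compl_of_mem_V1Set hRP hA₁ hS hnt hgp hB
      (hAC.trans hS hnt hgp hA₁.1 hCE hBcE h)

end Ultrafilter

end

theorem U2_is_ultrafilter_general
    {G : Type*} [Group G] {n : ℕ} (S : Finset G)
    (hS : Subgroup.closure (S : Set G) = ⊤)
    (H : Fin n → Subgroup G)
    (X : Fin n → Set G) (hnt : ∀ i, NontrivAI (H i) (X i))
    (hgp : GoodPos H X) (g : G) (R : ℕ)
    (hRP : ∀ A ∈ ESet X, ∀ B ∈ ESet X, LeE H X A B →
      ∀ g' ∈ A, {x : G | InBall S R g' x} ⊆ A → g' ∈ B)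
    (A₁ : Set G) (hA1 : A₁ ∈ V1Set H S R g X) :
    (∀ B : Set G, ¬ (B ∈ U2Set H S R g X A₁ ∧ Bᶜ ∈ U2Set H S R g X A₁)) ∧
      (∀ C ∈ U2Set H S R g X A₁,
        ∀ D ∈ U2Set H S R g X A₁ ∪ (fun B : Set G => Bᶜ) '' U2Set H S R g X A₁,
          LeE H X C D → D ∈ U2Set H S R g X A₁) := by
  refine ⟨fun B ⟨hB, hBc⟩ => not_leE_compl_of_mem_U2Set hRP hA1 hS hnt hgp hB hBc ?_, ?_⟩
  · rw [compl_compl]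
    exact leE_refl B
  · rintro C hC D (hD | ⟨B, hB, rfl⟩) h
    exacts [hD, (not_leE_compl_of_mem_U2Set hRP hA1 hS hnt hgp hC hB h).elim]

/-- `U₂` is an ultrafilter on `U₂ ∪ U₂*`. -/
theorem U2_is_ultrafilter
    {G : Type*} [Group G] {n : ℕ} (S : Finset G)
    (hS : Subgroup.closure (S : Set G) = ⊤)
    (H : Fin n → Subgroup G) (hfg : ∀ i, (H i).FG)
    (X : Fin n → Set G) (hnt : ∀ i, NontrivAI (H i) (X i))
    (hgp : GoodPos H X) (g : G) (R : ℕ) (hR : 0 < R)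
    (hRP : ∀ A ∈ ESet X, ∀ B ∈ ESet X, LeE H X A B →
      ∀ g' ∈ A, {x : G | InBall S R g' x} ⊆ A → g' ∈ B)
    (A₁ : Set G) (hA1 : A₁ ∈ V1Set H S R g X)
    (hmin : ∀ B ∈ V1Set H S R g X, LeE H X B A₁ → B = A₁) :
    (∀ B : Set G, ¬ (B ∈ U2Set H S R g X A₁ ∧ Bᶜ ∈ U2Set H S R g X A₁)) ∧
      (∀ C ∈ U2Set H S R g X A₁,
        ∀ D ∈ U2Set H S R g X A₁ ∪ (fun B : Set G => Bᶜ) '' U2Set H S R g X A₁,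
          LeE H X C D → D ∈ U2Set H S R g X A₁) :=
  U2_is_ultrafilter_general S hS H X hnt hgp g R hRP A₁ hA1
end

section
/- Let G be a finitely generated group with a finitely generated subgroup H, let X be a nontrivial H-almost invariant subset of G, and let 𝒦 = 𝒦(X) = {g ∈ G : gX ~ X or gX ~ X*} and 𝒦₀ = 𝒦₀(X) = {g ∈ G : gX ~ X}. If H has finite index in 𝒦, then there is a 𝒦₀-almost invariant subset W of G whose stabiliser {g ∈ G : gW = W} equals 𝒦₀, such that W is equivalent to X and E(W) is nested with respect to 𝒦, i.e. for every k ∈ 𝒦 one of the four corners of (W, kW) is empty. -/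
open Pointwise

universe u v

/-!
Because `H` has finite index in `𝒦`, finitely many right cosets `H t` with `t ∈ 𝒦` control all
the almost equalities `k • X ~ X` (`k ∈ 𝒦₀`) and `k • X ~ Xᶜ` (`k ∈ 𝒦 \ 𝒦₀`) at once, so outside
one `H`-finite set every `k ∈ 𝒦` moves `X` exactly: `k * x ∈ X ↔ (x ∈ X ↔ k ∈ 𝒦₀)`. As `𝒦₀` has
index at most two in `𝒦`, these points form a `𝒦`-invariant set; replacing `X` on each remaining
orbit `𝒦 x` by a single coset `𝒦₀ r` yields `W ~ X` with `k • W = W` for `k ∈ 𝒦₀` and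
`k • W = Wᶜ` otherwise, which is the nesting. The stabiliser of `W` is `H`-finite, since
`g ↦ g x` maps it into a coboundary `W \ W a`; hence any `g` fixing `W` carries `H`-finite sets
to `H`-finite sets, and `g • X ~ g • W = W ~ X` puts `g` in `𝒦₀`.
-/

section

variable {G : Type*} [Group G] {H K K₀ : Subgroup G} {A B C W X : Set G}

namespace HFin

theorem mono_s18 (hB : HFin H B) (hAB : A ⊆ B) : HFin H A :=
  let ⟨F, hF⟩ := hB
  ⟨F, hAB.trans hF⟩

theorem empty : HFin H (∅ : Set G) := ⟨∅, Set.empty_subset _⟩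

theorem union_s18 (hA : HFin H A) (hB : HFin H B) : HFin H (A ∪ B) := by
  classical
  obtain ⟨F₁, h₁⟩ := hA
  obtain ⟨F₂, h₂⟩ := hB
  refine ⟨F₁ ∪ F₂, Set.union_subset (h₁.trans ?_) (h₂.trans ?_)⟩ <;>
    exact Set.mul_subset_mul_left (by simp)

theorem biUnion {ι : Type*} (s : Finset ι) {f : ι → Set G} (hf : ∀ i ∈ s, HFin H (f i)) :
    HFin H (⋃ i ∈ s, f i) := by
  classical
  induction s using Finset.induction_on with
  | empty => simpa using empty
  | insert i s _ ih =>
    rw [Finset.set_biUnion_insert]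
    exact (hf i (s.mem_insert_self i)).union_s18 (ih fun j hj => hf j (Finset.mem_insert_of_mem hj))

theorem of_le (hHK : H ≤ K) (hA : HFin H A) : HFin K A :=
  let ⟨F, hF⟩ := hA
  ⟨F, hF.trans (Set.mul_subset_mul_right (SetLike.coe_subset_coe.2 hHK))⟩

theorem image_mul_right (a : G) (hA : HFin H A) : HFin H ((· * a) '' A) := by
  classical
  obtain ⟨F, hF⟩ := hA
  refine ⟨F.image (· * a), ?_⟩
  rintro _ ⟨x, hx, rfl⟩
  obtain ⟨h, hh, f, hf, rfl⟩ := hF hx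
  exact ⟨h, hh, f * a, Finset.mem_coe.2 (Finset.mem_image_of_mem _ hf), (mul_assoc h f a).symm⟩

theorem smul {g : G} (hg : HFin H (g • (H : Set G))) (hA : HFin H A) : HFin H (g • A) := by
  classical
  obtain ⟨F, hF⟩ := hA
  obtain ⟨F', hF'⟩ := hg
  refine ⟨F' * F, ?_⟩
  calc g • A ⊆ g • ((H : Set G) * F) := Set.smul_set_mono hF
    _ = g • (H : Set G) * F := (smul_mul_assoc g _ _).symm
    _ ⊆ (H : Set G) * F' * F := Set.mul_subset_mul_right hF'
    _ = (H : Set G) * ↑(F' * F) := by rw [Finset.coe_mul, mul_assoc]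

end HFin

theorem hfin_of_index_ne_zero (h : (H.subgroupOf K).index ≠ 0) : HFin H K := by
  classical
  have := Subgroup.index_ne_zero_iff_finite.1 h
  have := Fintype.ofFinite (K ⧸ H.subgroupOf K)
  refine ⟨Finset.univ.image fun q : K ⧸ H.subgroupOf K => ((q.out : K) : G)⁻¹, ?_⟩
  intro k hk
  have hq := QuotientGroup.leftRel_apply.1
    (Quotient.mk_out (s := QuotientGroup.leftRel (H.subgroupOf K)) (⟨k⁻¹, inv_mem hk⟩ : K))
  rw [Subgroup.mem_subgroupOf] at hq
  push_cast at hq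
  set q := Quotient.mk (QuotientGroup.leftRel (H.subgroupOf K)) ⟨k⁻¹, inv_mem hk⟩
  exact ⟨_, inv_mem hq, _, Finset.mem_image.2 ⟨q, Finset.mem_univ _, rfl⟩, by group⟩

theorem hfin_stabilizer (hW : ∀ a, HFin H (W \ (· * a) '' W)) (hne : W.Nonempty)
    (hne' : Wᶜ.Nonempty) : HFin H {g : G | g • W = W} := by
  obtain ⟨x, hx⟩ := hne
  obtain ⟨y, hy⟩ := hne'
  refine ((hW (y⁻¹ * x)).image_mul_right x⁻¹).mono_s18 fun g (hg : g • W = W) => ?_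
  refine ⟨g * x, ⟨hg ▸ Set.smul_mem_smul_set hx, ?_⟩, mul_inv_cancel_right g x⟩
  rintro ⟨z, hz, hzg : z * (y⁻¹ * x) = g * x⟩
  have hgy : g • y ∈ g • W := by
    rw [hg, smul_eq_mul]
    simpa [eq_mul_inv_of_mul_eq hzg, mul_assoc] using hz
  exact hy (Set.smul_mem_smul_set_iff.1 hgy)

theorem aiEquiv_iff : AIEquiv H A B ↔ HFin H (symmDiff A B) := by
  rw [Set.symmDiff_def]
  rfl

namespace AIEquiv

theorem symm (h : AIEquiv H A B) : AIEquiv H B A := by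
  rw [aiEquiv_iff] at h ⊢
  rwa [symmDiff_comm]

theorem trans (h₁ : AIEquiv H A B) (h₂ : AIEquiv H B C) : AIEquiv H A C := by
  rw [aiEquiv_iff] at *
  exact (h₁.union_s18 h₂).mono_s18 (symmDiff_triangle A B C)

theorem compl (h : AIEquiv H A B) : AIEquiv H Aᶜ Bᶜ := by
  rwa [aiEquiv_iff, compl_symmDiff_compl, ← aiEquiv_iff]

theorem smul {g : G} (hg : HFin H (g • (H : Set G))) (h : AIEquiv H A B) :
    AIEquiv H (g • A) (g • B) := by
  rw [aiEquiv_iff] at h ⊢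
  rw [← Set.smul_set_symmDiff]
  exact HFin.smul hg h

end AIEquiv

theorem nonempty_of_aiEquiv (hX : ¬ HFin H X) (h : AIEquiv H X W) : W.Nonempty := by
  rw [Set.nonempty_iff_ne_empty]
  rintro rfl
  exact hX (h.mono_s18 fun x hx => Or.inl ⟨hx, id⟩)

theorem AlmostInv.of_aiEquiv (hX : AlmostInv H X) (hXW : AIEquiv H X W)
    (hW : ∀ h ∈ H, h • W = W) : AlmostInv H W := by
  refine ⟨hW, fun a => ?_⟩
  have hXWa : HFin H (symmDiff ((· * a) '' X) ((· * a) '' W)) := by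
    rw [← Set.image_symmDiff (mul_left_injective a)]
    exact ((aiEquiv_iff.1 hXW).image_mul_right a)
  rw [← Set.symmDiff_def]
  refine (((aiEquiv_iff.1 hXW.symm).union_s18 (hX.2 a)).union_s18 hXWa).mono_s18 ?_
  exact (symmDiff_triangle _ X _).trans
    (sup_le_sup_left (symmDiff_triangle _ ((· * a) '' X) _) _) |>.trans (sup_assoc ..).ge

theorem AlmostInv.of_le (hHK : H ≤ K) (hW : AlmostInv H W) (hK : ∀ k ∈ K, k • W = W) :
    AlmostInv K W :=
  ⟨hK, fun a => (hW.2 a).of_le hHK⟩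

theorem aiEquiv_smul_of_smul_eq (hX : NontrivAI H X) (hXW : AIEquiv H X W)
    (hHW : ∀ h ∈ H, h • W = W) {g : G} (hg : g • W = W) : AIEquiv H (g • X) X := by
  have hW := hX.1.of_aiEquiv hXW hHW
  have hstab := hfin_stabilizer (fun a => (hW.2 a).mono_s18 Set.subset_union_left)
    (nonempty_of_aiEquiv hX.2.1 hXW) (nonempty_of_aiEquiv hX.2.2 hXW.compl)
  have hgH : HFin H (g • (H : Set G)) := hstab.mono_s18 <| Set.smul_set_subset_iff.2
    fun h hh => show (g * h) • W = W by rw [mul_smul, hHW h hh, hg]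
  have hgXW := hXW.smul hgH
  rw [hg] at hgXW
  exact hgXW.trans hXW.symm

theorem aiEquiv_mul_smul_of_aiEquiv_compl {a b : G} (ha : HFin H (a • (H : Set G)))
    (haX : AIEquiv H (a • X) Xᶜ) (hbX : AIEquiv H (b • X) Xᶜ) : AIEquiv H ((a * b) • X) X := by
  rw [mul_smul]
  refine (hbX.smul ha).trans ?_
  simpa only [Set.smul_set_compl, compl_compl] using haX.compl

theorem mul_mem_iff_mem_iff_mem (h2 : ∀ a ∈ K, ∀ b ∈ K, a ∉ K₀ → b ∉ K₀ → a * b ∈ K₀)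
    {a b : G} (ha : a ∈ K) (hb : b ∈ K) : a * b ∈ K₀ ↔ (a ∈ K₀ ↔ b ∈ K₀) := by
  by_cases ha₀ : a ∈ K₀
  · simp [ha₀, K₀.mul_mem_cancel_left ha₀]
  by_cases hb₀ : b ∈ K₀
  · simp [ha₀, hb₀, K₀.mul_mem_cancel_right hb₀]
  simp [ha₀, hb₀, h2 a ha b hb ha₀ hb₀]

/-- At `x`, `W` looks like a set satisfying `k • W = W` for `k ∈ K₀` and `k • W = Wᶜ` for
`k ∈ K \ K₀`. -/
def IsTwistedAt (K K₀ : Subgroup G) (W : Set G) (x : G) : Prop :=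
  ∀ k ∈ K, (k * x ∈ W ↔ (x ∈ W ↔ k ∈ K₀))

theorem IsTwistedAt.mul_left (h2 : ∀ a ∈ K, ∀ b ∈ K, a ∉ K₀ → b ∉ K₀ → a * b ∈ K₀) {x k : G}
    (hx : IsTwistedAt K K₀ W x) (hk : k ∈ K) : IsTwistedAt K K₀ W (k * x) := by
  intro m hm
  have hmk := hx (m * k) (K.mul_mem hm hk)
  have hk' := hx k hk
  rw [mul_mem_iff_mem_iff_mem h2 hm hk, mul_assoc] at hmk
  tauto

open scoped Classical in
theorem smul_eq_ite_of_isTwistedAt (hW : ∀ x, IsTwistedAt K K₀ W x) {k : G} (hk : k ∈ K) :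
    k • W = if k ∈ K₀ then W else Wᶜ := by
  ext x
  have hx := hW (k⁻¹ * x) k hk
  rw [mul_inv_cancel_left] at hx
  rw [Set.mem_smul_set_iff_inv_smul_mem, smul_eq_mul]
  split_ifs with hk₀ <;> simp only [hk₀, iff_true, iff_false, Set.mem_compl_iff] at hx ⊢ <;> tauto

/-- The set meeting each orbit `K x` in the coset `K₀ r`, where `r` is the chosen
representative of `K x`. -/
def orbitPattern (K K₀ : Subgroup G) : Set G :=
  {x | x * (Quotient.mk (QuotientGroup.rightRel K) x).out⁻¹ ∈ K₀}

theorem isTwistedAt_orbitPattern (h2 : ∀ a ∈ K, ∀ b ∈ K, a ∉ K₀ → b ∉ K₀ → a * b ∈ K₀)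
    (x : G) : IsTwistedAt K K₀ (orbitPattern K K₀) x := by
  intro k hk
  have hrep : Quotient.mk (QuotientGroup.rightRel K) (k * x) =
      Quotient.mk (QuotientGroup.rightRel K) x :=
    Quotient.sound (QuotientGroup.rightRel_apply.2 (by simpa [mul_assoc] using inv_mem hk))
  have hxK : x * (Quotient.mk (QuotientGroup.rightRel K) x).out⁻¹ ∈ K :=
    QuotientGroup.rightRel_apply.1 (Quotient.mk_out x)
  simp only [orbitPattern, Set.mem_ofPred_eq, hrep, mul_assoc,
    mul_mem_iff_mem_iff_mem h2 hk hxK]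
  exact iff_comm

theorem isTwistedAt_ite (hA : ∀ k ∈ K, ∀ x, k * x ∈ A ↔ x ∈ A)
    (h₁ : ∀ x ∈ A, IsTwistedAt K K₀ B x) (h₂ : ∀ x ∉ A, IsTwistedAt K K₀ C x) (x : G) :
    IsTwistedAt K K₀ (A.ite B C) x := by
  intro k hk
  have hkx := hA k hk x
  by_cases hx : x ∈ A
  · simpa [Set.ite, hx, hkx.2 hx] using h₁ x hx k hk
  · simpa [Set.ite, hx, mt hkx.1 hx] using h₂ x hx k hk

theorem exists_forall_isTwistedAt_symmDiff_subset
    (h2 : ∀ a ∈ K, ∀ b ∈ K, a ∉ K₀ → b ∉ K₀ → a * b ∈ K₀) (X : Set G) :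
    ∃ W, (∀ x, IsTwistedAt K K₀ W x) ∧ symmDiff X W ⊆ {x | ¬ IsTwistedAt K K₀ X x} := by
  refine ⟨{x | IsTwistedAt K K₀ X x}.ite X (orbitPattern K K₀), ?_, ?_⟩
  · refine isTwistedAt_ite (fun k hk x => ⟨fun h => ?_, fun h => h.mul_left h2 hk⟩)
      (fun x hx => hx) (fun x _ => isTwistedAt_orbitPattern h2 x)
    simpa using h.mul_left h2 (inv_mem hk)
  · intro x hx hxX
    simp [Set.mem_symmDiff, Set.ite, hxX] at hx

def twistDefect (K₀ : Subgroup G) (X : Set G) (k : G) : Set G :=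
  {x | ¬ (k * x ∈ X ↔ (x ∈ X ↔ k ∈ K₀))}

open scoped Classical in
theorem twistDefect_eq_symmDiff (K₀ : Subgroup G) (X : Set G) (k : G) :
    twistDefect K₀ X k = symmDiff (k⁻¹ • X) (if k⁻¹ ∈ K₀ then X else Xᶜ) := by
  ext x
  simp only [twistDefect, Set.mem_ofPred_eq, Set.mem_symmDiff, Set.mem_smul_set_iff_inv_smul_mem,
    inv_inv, smul_eq_mul, inv_mem_iff]
  split_ifs with hk₀ <;> simp only [hk₀, iff_true, iff_false, Set.mem_compl_iff] <;> tauto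

theorem twistDefect_mul_left (hHK₀ : H ≤ K₀) (hXH : ∀ h ∈ H, h • X = X) {h : G} (hh : h ∈ H)
    (k : G) : twistDefect K₀ X (h * k) = twistDefect K₀ X k := by
  have hX : ∀ y, h * y ∈ X ↔ y ∈ X := fun y => by
    simpa only [hXH h hh, smul_eq_mul] using Set.smul_mem_smul_set_iff (a := h) (s := X) (x := y)
  ext x
  simp only [twistDefect, Set.mem_ofPred_eq, mul_assoc, hX, K₀.mul_mem_cancel_left (hHK₀ hh)]

theorem hfin_setOf_not_isTwistedAt (hHK₀ : H ≤ K₀) (hK₀K : K₀ ≤ K) (hKH : HFin H K)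
    (hXH : ∀ h ∈ H, h • X = X) (hX₀ : ∀ k ∈ K₀, AIEquiv H (k • X) X)
    (hX₁ : ∀ k ∈ K, k ∉ K₀ → AIEquiv H (k • X) Xᶜ) :
    HFin H {x | ¬ IsTwistedAt K K₀ X x} := by
  classical
  obtain ⟨T, hT⟩ := hKH
  refine (HFin.biUnion (T.filter (· ∈ K)) (f := twistDefect K₀ X) fun t ht => ?_).mono_s18
    fun x hx => ?_
  · rw [twistDefect_eq_symmDiff, ← aiEquiv_iff]
    split_ifs with ht₀
    exacts [hX₀ _ ht₀, hX₁ _ (inv_mem (Finset.mem_filter.1 ht).2) ht₀]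
  · obtain ⟨k, hk, hkx⟩ : ∃ k ∈ K, x ∈ twistDefect K₀ X k := by
      simpa [IsTwistedAt, twistDefect] using hx
    obtain ⟨h, hh, t, ht, rfl⟩ := hT hk
    have htK : t ∈ K := by simpa using K.mul_mem (hK₀K (hHK₀ (inv_mem hh))) hk
    rw [twistDefect_mul_left hHK₀ hXH hh] at hkx
    exact Set.mem_biUnion (Finset.mem_filter.2 ⟨ht, htK⟩) hkx

end

theorem finite_index_case_nested_general
    {G : Type*} [Group G] (H : Subgroup G)
    (X : Set G) (hX : NontrivAI H X)
    (𝒦 𝒦₀ : Subgroup G)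
    (h𝒦 : (𝒦 : Set G) = {g : G | AIEquiv H (g • X) X ∨ AIEquiv H (g • X) Xᶜ})
    (h𝒦₀ : (𝒦₀ : Set G) = {g : G | AIEquiv H (g • X) X})
    (hfin : (H.subgroupOf 𝒦).index ≠ 0) :
    ∃ W : Set G, AlmostInv 𝒦₀ W ∧ {g : G | g • W = W} = (𝒦₀ : Set G) ∧
      AIEquiv H X W ∧
      ∀ k ∈ 𝒦, (W ∩ k • W = ∅ ∨ W ∩ (k • W)ᶜ = ∅ ∨
        Wᶜ ∩ k • W = ∅ ∨ Wᶜ ∩ (k • W)ᶜ = ∅) := by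
  have mem𝒦₀ (g : G) : g ∈ 𝒦₀ ↔ AIEquiv H (g • X) X := Set.ext_iff.1 h𝒦₀ g
  have mem𝒦 (g : G) : g ∈ 𝒦 ↔ AIEquiv H (g • X) X ∨ AIEquiv H (g • X) Xᶜ := Set.ext_iff.1 h𝒦 g
  have hH𝒦₀ : H ≤ 𝒦₀ := fun h hh => (mem𝒦₀ h).2 <| by
    simpa [hX.1.1 h hh, aiEquiv_iff] using (HFin.empty : HFin H ∅)
  have h𝒦₀𝒦 : 𝒦₀ ≤ 𝒦 := fun g hg => (mem𝒦 g).2 (Or.inl ((mem𝒦₀ g).1 hg))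
  have h𝒦H := hfin_of_index_ne_zero hfin
  have hsmulH : ∀ k ∈ 𝒦, HFin H (k • (H : Set G)) := fun k hk => h𝒦H.mono_s18 <|
    Set.smul_set_subset_iff.2 fun h hh => 𝒦.mul_mem hk (h𝒦₀𝒦 (hH𝒦₀ hh))
  have hcompl : ∀ k ∈ 𝒦, k ∉ 𝒦₀ → AIEquiv H (k • X) Xᶜ := fun k hk hk₀ =>
    ((mem𝒦 k).1 hk).resolve_left (mt (mem𝒦₀ k).2 hk₀)
  have h2 : ∀ a ∈ 𝒦, ∀ b ∈ 𝒦, a ∉ 𝒦₀ → b ∉ 𝒦₀ → a * b ∈ 𝒦₀ := fun a ha b hb ha₀ hb₀ =>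
    (mem𝒦₀ _).2 (aiEquiv_mul_smul_of_aiEquiv_compl (hsmulH a ha) (hcompl a ha ha₀)
      (hcompl b hb hb₀))
  obtain ⟨W, hW, hXW⟩ := exists_forall_isTwistedAt_symmDiff_subset h2 X
  have hXW' : AIEquiv H X W := aiEquiv_iff.2 <|
    (hfin_setOf_not_isTwistedAt hH𝒦₀ h𝒦₀𝒦 h𝒦H hX.1.1 (fun k => (mem𝒦₀ k).1) hcompl).mono_s18 hXW
  have hW₀ : ∀ k ∈ 𝒦₀, k • W = W := fun k hk => by
    simpa [hk] using smul_eq_ite_of_isTwistedAt hW (h𝒦₀𝒦 hk)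
  have hHW : ∀ h ∈ H, h • W = W := fun h hh => hW₀ h (hH𝒦₀ hh)
  refine ⟨W, (hX.1.of_aiEquiv hXW' hHW).of_le hH𝒦₀ hW₀,
    Set.ext fun g => ⟨fun hg => (mem𝒦₀ g).2 (aiEquiv_smul_of_smul_eq hX hXW' hHW hg), hW₀ g⟩,
    hXW', fun k hk => ?_⟩
  rw [smul_eq_ite_of_isTwistedAt hW hk]
  split_ifs <;> simp

/-- Scott–Swarup, Proposition 2.14, part 1: if `H` has finite index in `𝒦(X)`, there is
an almost invariant set `W` equivalent to `X`, with stabiliser `𝒦₀`, such that `E(W)`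
is nested with respect to `𝒦`. -/
theorem finite_index_case_nested
    {G : Type*} [Group G] (hG : Group.FG G) (H : Subgroup G) (hH : H.FG)
    (X : Set G) (hX : NontrivAI H X)
    (𝒦 𝒦₀ : Subgroup G)
    (h𝒦 : (𝒦 : Set G) = {g : G | AIEquiv H (g • X) X ∨ AIEquiv H (g • X) Xᶜ})
    (h𝒦₀ : (𝒦₀ : Set G) = {g : G | AIEquiv H (g • X) X})
    (hfin : (H.subgroupOf 𝒦).index ≠ 0) :
    ∃ W : Set G, AlmostInv 𝒦₀ W ∧ {g : G | g • W = W} = (𝒦₀ : Set G) ∧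
      AIEquiv H X W ∧
      ∀ k ∈ 𝒦, (W ∩ k • W = ∅ ∨ W ∩ (k • W)ᶜ = ∅ ∨
        Wᶜ ∩ k • W = ∅ ∨ Wᶜ ∩ (k • W)ᶜ = ∅) :=
  finite_index_case_nested_general H X hX 𝒦 𝒦₀ h𝒦 h𝒦₀ hfin
end
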